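/- arXiv:1808.06163 — 5 statements merged into one kernel-verified Lean document; each statement's English description precedes it below -/
import Mathlib

section
/- Let e : ℕ → ℝ satisfy e(0) = 0, e(1) = 1, and e(n) = (2/(n-1))·Σ_{k=0}^{n-2} e(k) for all n ≥ 2. Then for every n ≥ 0, e(n) = Σ_{k=0}^{n} (n−k)·(−2)^k / k!. -/
/-!
The closed form `f n = ∑_{k ≤ n} (n - k) (-2)^k / k!` is the sum `∑_{j ≤ n} g j` of the partial
sums `g j = ∑_{k < j} (-2)^k / k!` of `exp (-2)`. Since `k (-2)^k / k! = -2 (-2)^(k-1) / (k-1)!`,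
also `f n = n g (n+1) + 2 g n`, and comparing the two expressions gives the three-term recurrence
`(n+1) f (n+2) = n f (n+1) + 2 f n`. Summing it telescopes to `(n+1) f (n+2) = 2 ∑_{k ≤ n} f k`,
which is the defining recurrence; the recurrence and the two initial values determine `e`.
-/

open Finset

def DimerRecurrence (e : ℕ → ℝ) : Prop :=
  ∀ n : ℕ, 2 ≤ n → e n = (2 / ((n : ℝ) - 1)) * ∑ k ∈ range (n - 1), e k

theorem DimerRecurrence.unique {e e' : ℕ → ℝ} (he : DimerRecurrence e) (he' : DimerRecurrence e')
    (h0 : e 0 = e' 0) (h1 : e 1 = e' 1) : e = e' := by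
  funext n
  induction n using Nat.strong_induction_on with
  | _ n ih =>
    match n, ih with
    | 0, _ => exact h0
    | 1, _ => exact h1
    | n + 2, ih =>
      rw [he _ le_add_self, he' _ le_add_self]
      congr 1
      exact sum_congr rfl fun k hk => ih k (by rw [mem_range] at hk; omega)

theorem sum_range_succ_mul_pow_div_factorial (x : ℝ) (n : ℕ) :
    ∑ k ∈ range (n + 1), (k : ℝ) * x ^ k / k.factorial
      = x * ∑ k ∈ range n, x ^ k / k.factorial := by
  rw [sum_range_succ', mul_sum]
  simp only [CharP.cast_eq_zero, zero_mul, zero_div, add_zero]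
  refine sum_congr rfl fun k _ => ?_
  rw [Nat.factorial_succ]
  push_cast
  field_simp
  ring

noncomputable def expNegTwoPartialSum (n : ℕ) : ℝ :=
  ∑ k ∈ range n, (-2 : ℝ) ^ k / k.factorial

noncomputable def dimerClosedForm (n : ℕ) : ℝ :=
  ∑ k ∈ range (n + 1), ((n : ℝ) - k) * (-2 : ℝ) ^ k / k.factorial

namespace dimerClosedForm

theorem eq_mul_partialSum (n : ℕ) :
    dimerClosedForm n = n * expNegTwoPartialSum (n + 1) + 2 * expNegTwoPartialSum n := by
  have hk := sum_range_succ_mul_pow_div_factorial (-2) n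
  simp only [dimerClosedForm, expNegTwoPartialSum, sub_mul, sub_div, sum_sub_distrib, mul_div_assoc,
    ← mul_sum] at hk ⊢
  linear_combination -hk

theorem succ (n : ℕ) :
    dimerClosedForm (n + 1) = dimerClosedForm n + expNegTwoPartialSum (n + 1) := by
  simp only [dimerClosedForm, expNegTwoPartialSum, sum_range_succ _ (n + 1), ← sum_add_distrib]
  push_cast
  simp only [sub_self, zero_mul, zero_div, add_zero]
  exact sum_congr rfl fun k _ => by ring

theorem three_term (n : ℕ) :
    ((n : ℝ) + 1) * dimerClosedForm (n + 2)
      = n * dimerClosedForm (n + 1) + 2 * dimerClosedForm n := by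
  have h := eq_mul_partialSum (n + 1)
  push_cast at h
  linear_combination ((n : ℝ) + 1) * succ (n + 1) + 2 * succ n - h

theorem succ_mul_eq_two_mul_sum (n : ℕ) :
    ((n : ℝ) + 1) * dimerClosedForm (n + 2) = 2 * ∑ k ∈ range (n + 1), dimerClosedForm k := by
  induction n with
  | zero => norm_num [dimerClosedForm, sum_range_succ]
  | succ n ih =>
    have h := three_term (n + 1)
    rw [sum_range_succ]
    push_cast at h ⊢
    linear_combination h + ih

theorem dimerRecurrence : DimerRecurrence dimerClosedForm := by
  intro n hn
  obtain ⟨n, rfl⟩ : ∃ m, n = m + 2 := ⟨n - 2, by omega⟩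
  have h := succ_mul_eq_two_mul_sum n
  rw [show n + 2 - 1 = n + 1 by omega, div_mul_eq_mul_div, ← h]
  push_cast
  rw [add_sub_assoc, show (2 : ℝ) - 1 = 1 by norm_num, mul_div_cancel_left₀ _ (by positivity)]

end dimerClosedForm

theorem stmt_1 (e : ℕ → ℝ) (h0 : e 0 = 0) (h1 : e 1 = 1)
    (hrec : ∀ n : ℕ, 2 ≤ n →
      e n = (2 / ((n : ℝ) - 1)) * ∑ k ∈ Finset.range (n - 1), e k) :
    ∀ n : ℕ, e n = ∑ k ∈ Finset.range (n + 1),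
      ((n : ℝ) - (k : ℝ)) * (-2 : ℝ) ^ k / (Nat.factorial k) := by
  have h := DimerRecurrence.unique hrec dimerClosedForm.dimerRecurrence
    (by simp [h0, dimerClosedForm]) (by simp [h1, dimerClosedForm, sum_range_succ])
  exact congrFun h
end

section
/- Let e : ℕ → ℝ satisfy e(0) = 0, e(1) = 1, and e(n) = (2/(n-1))·Σ_{k=0}^{n-2} e(k) for all n ≥ 2. Then e(n)/n converges to e^{−2} as n → ∞. -/
/-!
Differencing the recurrence twice turns it into `(n + 1) t (n + 1) = -2 t n` for the second
differences `t`, whose solution with the given initial values is `t n = (-2) ^ n / n !`. Hence the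
first differences `e (n + 1) - e n` are the partial sums of the exponential series at `-2`, which
tend to `exp (-2)`, and `e n / n` is their Cesàro mean.
-/

open Finset Filter Topology Nat

lemma succ_mul_pow_succ_div_factorial_succ (x : ℝ) (n : ℕ) :
    ((n : ℝ) + 1) * (x ^ (n + 1) / (n + 1)!) = x * (x ^ n / n !) := by
  rw [factorial_succ, pow_succ]
  push_cast
  field_simp

namespace Dimer

noncomputable def expPartialSum (n : ℕ) : ℝ := ∑ k ∈ range (n + 1), (-2 : ℝ) ^ k / k !

noncomputable def solution (n : ℕ) : ℝ := ∑ m ∈ range n, expPartialSum m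

lemma expPartialSum_succ (n : ℕ) :
    expPartialSum (n + 1) = expPartialSum n + (-2 : ℝ) ^ (n + 1) / (n + 1)! :=
  sum_range_succ _ _

lemma solution_succ (n : ℕ) : solution (n + 1) = solution n + expPartialSum n :=
  sum_range_succ _ _

/-- The recurrence for `solution`, differenced once. -/
lemma succ_mul_expPartialSum_succ_add_solution_succ (n : ℕ) :
    ((n : ℝ) + 1) * expPartialSum (n + 1) + solution (n + 1) = 2 * solution n := by
  induction n with
  | zero => norm_num [expPartialSum, solution, sum_range_succ]
  | succ n ih =>
    have hterm := succ_mul_pow_succ_div_factorial_succ (-2) (n + 1)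
    rw [expPartialSum_succ (n + 1), solution_succ (n + 1), solution_succ n,
      expPartialSum_succ n] at *
    push_cast at *
    linear_combination ih + hterm

lemma mul_solution_succ (n : ℕ) :
    (n : ℝ) * solution (n + 1) = 2 * ∑ k ∈ range n, solution k := by
  induction n with
  | zero => simp
  | succ n ih =>
    rw [sum_range_succ, solution_succ (n + 1)]
    push_cast
    linear_combination ih + succ_mul_expPartialSum_succ_add_solution_succ n

lemma eq_solution (e : ℕ → ℝ) (h0 : e 0 = 0) (h1 : e 1 = 1)
    (hrec : ∀ n : ℕ, 2 ≤ n → e n = (2 / ((n : ℝ) - 1)) * ∑ k ∈ range (n - 1), e k) :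
    e = solution := by
  funext n
  induction n using Nat.strong_induction_on with
  | _ n ih =>
    match n, ih with
    | 0, _ => simp [h0, solution]
    | 1, _ => simp [h1, solution, expPartialSum]
    | m + 2, ih =>
      have hsum : ∑ k ∈ range (m + 1), e k = ∑ k ∈ range (m + 1), solution k :=
        sum_congr rfl fun k hk => ih k (by simp at hk; omega)
      have hsol := mul_solution_succ (m + 1)
      have hden : ((m + 2 : ℕ) : ℝ) - 1 = m + 1 := by push_cast; ring
      rw [hrec (m + 2) (by omega), show m + 2 - 1 = m + 1 by omega, hsum, hden]
      push_cast at hsol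
      field_simp
      linear_combination -hsol

lemma tendsto_expPartialSum : Tendsto expPartialSum atTop (𝓝 (Real.exp (-2))) := by
  have hsum : HasSum (fun k : ℕ => (-2 : ℝ) ^ k / k !) (Real.exp (-2)) := by
    rw [Real.exp_eq_exp_ℝ]
    exact NormedSpace.expSeries_div_hasSum_exp (-2 : ℝ)
  exact hsum.tendsto_sum_nat.comp (tendsto_add_atTop_nat 1)

end Dimer

theorem stmt_2 (e : ℕ → ℝ) (h0 : e 0 = 0) (h1 : e 1 = 1)
    (hrec : ∀ n : ℕ, 2 ≤ n →
      e n = (2 / ((n : ℝ) - 1)) * ∑ k ∈ Finset.range (n - 1), e k) :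
    Filter.Tendsto (fun n : ℕ => e n / (n : ℝ)) Filter.atTop
      (nhds (Real.exp (-2))) := by
  rw [Dimer.eq_solution e h0 h1 hrec]
  refine Dimer.tendsto_expPartialSum.cesaro.congr fun n => ?_
  rw [Dimer.solution, div_eq_inv_mul]
end

section
/- Let e : ℕ → ℝ satisfy e(0) = 0 and (n+1)·e(n+2) − n·e(n+1) = 2·e(n) for all n ≥ 0, and let A = Σ_{n=0}^{∞} e(n)·X^n be the associated formal power series in ℝ[[X]]. Then A satisfies the formal differential equation (X − X^2)·A′ = (2X^2 + 1 − X)·A, where A′ denotes the formal derivative of A. -/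
open PowerSeries

theorem PowerSeries.X_sub_X_sq_mul_derivative_mk {R : Type*} [CommRing R] (e : ℕ → R)
    (h0 : e 0 = 0) (hrec : ∀ n : ℕ, ((n : R) + 1) * e (n + 2) - (n : R) * e (n + 1) = 2 * e n) :
    (X - X ^ 2) * d⁄dX R (mk e) = (2 * X ^ 2 + 1 - X) * mk e := by
  have hL : (X - X ^ 2) * d⁄dX R (mk e) = X * d⁄dX R (mk e) - X * (X * d⁄dX R (mk e)) := by
    ring
  have hR : (2 * X ^ 2 + 1 - X) * mk e = X * (X * (2 • mk e)) + mk e - X * mk e := by ring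
  rw [hL, hR]
  -- at `X ^ (n + 2)` the coefficients agree exactly by the recurrence at `n`
  ext n
  rcases n with _ | _ | n
  · simp [h0]
  · simp [coeff_derivative, h0]
  · simp only [map_sub, map_add, coeff_succ_X_mul, coeff_derivative, map_nsmul, coeff_mk]
    push_cast
    linear_combination hrec n

theorem stmt_5 (e : ℕ → ℝ) (h0 : e 0 = 0)
    (hrec : ∀ n : ℕ, ((n : ℝ) + 1) * e (n + 2) - (n : ℝ) * e (n + 1) = 2 * e n)
    (A : PowerSeries ℝ) (hA : A = PowerSeries.mk e) :
    (PowerSeries.X - PowerSeries.X ^ 2) * (PowerSeries.derivative ℝ A) =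
      (2 * PowerSeries.X ^ 2 + 1 - PowerSeries.X) * A := by
  subst hA
  exact X_sub_X_sq_mul_derivative_mk e h0 hrec
end

section
/- Let e : ℕ → ℝ satisfy e(0) = 0, e(1) = 1, and e(n) = (2/(n-1))·Σ_{k=0}^{n-2} e(k) for all n ≥ 2. Then in the ring of formal power series ℝ[[X]] one has the identity (1 − X)^2 · (Σ_{n=0}^{∞} e(n)·X^n) = X · Σ_{n=0}^{∞} ((−2)^n / n!)·X^n; equivalently, the generating function of e equals X·exp(−2X)/(1−X)^2. -/
/-!
The recurrence says `(n - 1) e(n) = 2 (e(0) + ⋯ + e(n - 2))`; differencing it gives the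
three-term recurrence `(m + 1) e(m + 2) = m e(m + 1) + 2 e(m)`. Multiplying the generating
function by `(1 - X)^2` takes second differences `g(n + 2) = e(n + 2) - 2 e(n + 1) + e(n)`, and
the three-term recurrence turns into `(n + 1) g(n + 2) = -2 g(n + 1)` with `g(0) = 0`,
`g(1) = 1`, which forces `g(n + 1) = (-2)^n / n!`.
-/

open PowerSeries Nat

namespace PowerSeries

variable {R : Type*} [CommRing R] (f : R⟦X⟧)

theorem coeff_one_one_sub_X_sq_mul :
    coeff 1 ((1 - X) ^ 2 * f) = coeff 1 f - 2 * coeff 0 f := by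
  have : ((1 - X) ^ 2 * f : R⟦X⟧) = f - 2 * (X * f) + X * (X * f) := by ring
  rw [this, map_add, map_sub, ← map_ofNat (C (R := R)) 2, coeff_C_mul, coeff_succ_X_mul,
    coeff_succ_X_mul, coeff_zero_X_mul, add_zero]

theorem coeff_add_two_one_sub_X_sq_mul (n : ℕ) :
    coeff (n + 2) ((1 - X) ^ 2 * f) = coeff (n + 2) f - 2 * coeff (n + 1) f + coeff n f := by
  have : ((1 - X) ^ 2 * f : R⟦X⟧) = f - 2 * (X * f) + X ^ 2 * f := by ring
  rw [this, map_add, map_sub, coeff_X_pow_mul, ← map_ofNat (C (R := R)) 2, coeff_C_mul,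
    coeff_succ_X_mul]

end PowerSeries

theorem eq_pow_div_factorial_of_succ_mul_eq {K : Type*} [Field K] [CharZero K] {c : K}
    {u : ℕ → K} (h0 : u 0 = 1) (hu : ∀ n : ℕ, (n + 1) * u (n + 1) = c * u n) (n : ℕ) :
    u n = c ^ n / n ! := by
  induction n with
  | zero => simp [h0]
  | succ n ih =>
    have hn : (n + 1 : K) ≠ 0 := by exact_mod_cast n.succ_ne_zero
    calc u (n + 1) = c * u n / (n + 1) := by rw [← hu n]; field_simp
      _ = c ^ (n + 1) / (n + 1) ! := by
        rw [ih, pow_succ, factorial_succ]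
        push_cast
        field_simp

section Recurrence

variable {e : ℕ → ℝ}
  (hrec : ∀ n : ℕ, 2 ≤ n →
    e n = (2 / ((n : ℝ) - 1)) * ∑ k ∈ Finset.range (n - 1), e k)

include hrec

theorem mul_succ_eq_two_mul_sum (m : ℕ) : m * e (m + 1) = 2 * ∑ k ∈ Finset.range m, e k := by
  rcases m.eq_zero_or_pos with rfl | hm
  · simp
  · rw [hrec (m + 1) (by omega)]
    have hm' : (m : ℝ) ≠ 0 := by positivity
    push_cast
    simp only [add_sub_cancel_right]
    field_simp

theorem succ_mul_eq_mul_add_two_mul (m : ℕ) : (m + 1) * e (m + 2) = m * e (m + 1) + 2 * e m := by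
  have h := mul_succ_eq_two_mul_sum hrec (m + 1)
  rw [Finset.sum_range_succ, mul_add, ← mul_succ_eq_two_mul_sum hrec m] at h
  push_cast at h
  linarith

theorem succ_mul_coeff_one_sub_X_sq_mul (h0 : e 0 = 0) (n : ℕ) :
    (n + 1) * coeff (n + 2) ((1 - X) ^ 2 * mk e) =
      -2 * coeff (n + 1) ((1 - X) ^ 2 * mk e : ℝ⟦X⟧) := by
  rcases n with _ | n
  · simp only [zero_add, coeff_add_two_one_sub_X_sq_mul, coeff_one_one_sub_X_sq_mul, coeff_mk]
    linear_combination succ_mul_eq_mul_add_two_mul hrec 0 - h0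
  · simp only [coeff_add_two_one_sub_X_sq_mul, coeff_mk]
    linear_combination (norm := (push_cast; ring1))
      succ_mul_eq_mul_add_two_mul hrec (n + 1) - succ_mul_eq_mul_add_two_mul hrec n

end Recurrence

theorem stmt_6 (e : ℕ → ℝ) (h0 : e 0 = 0) (h1 : e 1 = 1)
    (hrec : ∀ n : ℕ, 2 ≤ n →
      e n = (2 / ((n : ℝ) - 1)) * ∑ k ∈ Finset.range (n - 1), e k) :
    (1 - PowerSeries.X : PowerSeries ℝ) ^ 2 * PowerSeries.mk e =
      PowerSeries.X *
        PowerSeries.mk (fun n : ℕ => (-2 : ℝ) ^ n / (Nat.factorial n)) := by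
  ext (_ | n)
  · simp [h0]
  · rw [coeff_succ_X_mul, coeff_mk]
    refine eq_pow_div_factorial_of_succ_mul_eq (u := fun n ↦ coeff (n + 1) _) ?_
      (succ_mul_coeff_one_sub_X_sq_mul hrec h0) n
    simp [coeff_one_one_sub_X_sq_mul, h0, h1]
end

section
/- Let G be a graph on a vertex set V in which every vertex has degree at most d, and equip the space [0,1]^{E(G)} of edge-label configurations (τ_e)_{e ∈ E(G)} with the product of uniform probability measures on [0,1]. Fix an edge e of G. Then almost surely there exists a finite r such that every monotone path in G whose first edge is e has length at most r; that is, almost surely there are only finitely many monotone paths starting with e, and they are all contained in the ball B_r(e) of radius r around e. -/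
/-!
Fix `n`. A decreasing walk of length `> n` whose first edge is `e` starts at an endpoint of `e`,
and its first `n + 1` edges form a decreasing walk of length `n + 1`. From a given vertex there
are at most `d ^ (n + 1)` walks of that length, and each is decreasing with probability at most
`1 / (n + 1)!`: if its edges are distinct their labels are i.i.d., so all `(n + 1)!` orderings of
them are equally likely, and otherwise it cannot be decreasing. Hence the event that no bound `r`
exists has probability at most `2 d ^ (n + 1) / (n + 1)!`, which tends to `0`.
-/

open MeasureTheory ProbabilityTheory Filter Topology
open scoped ENNReal Nat

theorem measurableSet_setOf_strictAnti (n : ℕ) :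
    MeasurableSet {x : Fin n → ℝ | StrictAnti x} := by
  simp only [StrictAnti, Set.ofPred_forall]
  exact .iInter fun i => .iInter fun j => .iInter fun _ =>
    measurableSet_lt (measurable_pi_apply _) (measurable_pi_apply _)

theorem Equiv.Perm.eq_of_strictAnti_comp {β : Type*} [Preorder β] {n : ℕ} {x : Fin n → β}
    {σ σ' : Equiv.Perm (Fin n)}
    (h : StrictAnti (x ∘ σ)) (h' : StrictAnti (x ∘ σ')) : σ = σ' := by
  have hx : x ∘ σ = x ∘ σ' := by
    rw [← h.range_inj h', Set.range_comp, Set.range_comp, σ.range_eq_univ, σ'.range_eq_univ]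
  have hinj : Function.Injective x := by
    simpa using h.injective.comp σ.symm.injective
  ext i
  exact congrArg Fin.val (hinj (congrFun hx i))

theorem measure_pi_strictAnti_le (m : Measure ℝ) [IsProbabilityMeasure m] (n : ℕ) :
    Measure.pi (fun _ : Fin n => m) {x | StrictAnti x} ≤ (n ! : ℝ≥0∞)⁻¹ := by
  set ν := Measure.pi (fun _ : Fin n => m)
  let D : Equiv.Perm (Fin n) → Set (Fin n → ℝ) := fun σ => (· ∘ σ) ⁻¹' {x | StrictAnti x}
  have hD : ∀ σ, ν (D σ) = ν {x | StrictAnti x} := fun σ => by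
    convert (measurePreserving_piCongrLeft (fun _ : Fin n => m) σ.symm).measure_preimage
      (measurableSet_setOf_strictAnti n).nullMeasurableSet using 2
    ext x
    have : MeasurableEquiv.piCongrLeft (fun _ => ℝ) σ.symm x = x ∘ σ := funext fun i => by
      simpa using MeasurableEquiv.piCongrLeft_apply_apply σ.symm (β := fun _ => ℝ) x (σ i)
    simp [D, this]
  have hdisj : Pairwise (Function.onFun Disjoint D) := fun σ σ' hne =>
    Set.disjoint_left.2 fun x h h' => hne (Equiv.Perm.eq_of_strictAnti_comp h h')
  have : (n ! : ℝ≥0∞) * ν {x | StrictAnti x} ≤ 1 :=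
    calc (n ! : ℝ≥0∞) * ν {x | StrictAnti x} = ∑ σ, ν (D σ) := by
          simp [hD, Fintype.card_perm]
      _ = ν (⋃ σ, D σ) := by
          rw [measure_iUnion hdisj, tsum_fintype]
          exact fun σ => (measurableSet_setOf_strictAnti n).preimage
            (measurable_pi_lambda _ fun i => measurable_pi_apply _)
      _ ≤ 1 := prob_le_one
  rwa [ENNReal.le_inv_iff_mul_le, mul_comm]

theorem List.pairwise_gt_map_iff_strictAnti {α β : Type*} [Preorder β] (f : α → β) (l : List α) :
    (l.map f).Pairwise (· > ·) ↔ StrictAnti (f ∘ l.get) := by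
  conv_lhs => rw [← List.ofFn_get l, List.map_ofFn]
  rw [← List.sortedGT_iff_pairwise, List.sortedGT_ofFn_iff]

theorem measure_pairwise_gt_le {Ω E : Type*} [MeasurableSpace Ω] {μ : Measure Ω}
    [IsProbabilityMeasure μ] {X : E → Ω → ℝ} (m : Measure ℝ) [IsProbabilityMeasure m]
    (hindep : iIndepFun X μ) (hlaw : ∀ ε, μ.map (X ε) = m) (l : List E) :
    μ {ω | (l.map (X · ω)).Pairwise (· > ·)} ≤ (l.length ! : ℝ≥0∞)⁻¹ := by
  by_cases hnd : l.Nodup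
  · have hX : ∀ ε, AEMeasurable (X ε) μ := fun ε =>
      .of_map_ne_zero (by rw [hlaw]; exact IsProbabilityMeasure.ne_zero m)
    let Φ : Ω → Fin l.length → ℝ := fun ω i => X (l.get i) ω
    have hΦ : μ.map Φ = Measure.pi fun _ => m := by
      rw [(iIndepFun_iff_map_fun_eq_pi_map fun i => hX _).1
        (hindep.precomp (List.nodup_iff_injective_get.1 hnd))]
      simp only [hlaw]
    have hset : {ω | (l.map (X · ω)).Pairwise (· > ·)} = Φ ⁻¹' {x | StrictAnti x} := by
      ext ω
      exact List.pairwise_gt_map_iff_strictAnti _ l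
    rw [hset, ← Measure.map_apply_of_aemeasurable (aemeasurable_pi_lambda _ fun i => hX _)
      (measurableSet_setOf_strictAnti _), hΦ]
    exact measure_pi_strictAnti_le m _
  · have : {ω | (l.map (X · ω)).Pairwise (· > ·)} = ∅ :=
      Set.eq_empty_of_forall_notMem fun ω h => hnd (List.Nodup.of_map _ (h.imp ne_of_gt))
    simp [this]

theorem ENNReal.tendsto_pow_mul_inv_factorial_atTop {c : ℝ≥0∞} (hc : c ≠ ∞) :
    Tendsto (fun n => c ^ n * (n ! : ℝ≥0∞)⁻¹) atTop (𝓝 0) := by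
  have h := ENNReal.tendsto_ofReal (FloorSemiring.tendsto_pow_div_factorial_atTop c.toReal)
  rw [ENNReal.ofReal_zero] at h
  refine h.congr fun n => ?_
  rw [ENNReal.ofReal_div_of_pos (by positivity), ENNReal.ofReal_pow ENNReal.toReal_nonneg,
    ENNReal.ofReal_toReal hc, ENNReal.ofReal_natCast, div_eq_mul_inv]

namespace SimpleGraph

variable {V : Type*} {G : SimpleGraph V}

theorem exists_finset_walks_length_eq [G.LocallyFinite] {d : ℕ} (hdeg : ∀ v, G.degree v ≤ d)
    (n : ℕ) (u : V) :
    ∃ s : Finset (Σ v, G.Walk u v), s.card ≤ d ^ n ∧ ∀ p, p ∈ s ↔ p.2.length = n := by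
  classical
  induction n generalizing u with
  | zero =>
    refine ⟨{⟨u, .nil⟩}, by simp, fun p => ⟨fun h => by rw [Finset.mem_singleton.1 h]; rfl,
      fun h => ?_⟩⟩
    obtain ⟨v, w⟩ := p
    cases w with
    | nil => simp
    | cons => simp at h
  | succ n ih =>
    choose S hcard hmem using ih
    refine ⟨(G.neighborFinset u).attach.biUnion fun a =>
      (S a).image fun p => ⟨p.1, .cons ((G.mem_neighborFinset u a).1 a.2) p.2⟩, ?_, ?_⟩
    · calc _ ≤ (G.neighborFinset u).attach.card * d ^ n :=
            Finset.card_biUnion_le_card_mul _ _ _ fun a _ => Finset.card_image_le.trans (hcard a)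
        _ ≤ d * d ^ n := by
            rw [Finset.card_attach, card_neighborFinset_eq_degree]
            exact Nat.mul_le_mul_right _ (hdeg u)
        _ = d ^ (n + 1) := (pow_succ' d n).symm
    · refine fun p => ⟨fun h => ?_, fun h => ?_⟩
      · obtain ⟨a, -, q, hq, rfl⟩ := by simpa only [Finset.mem_biUnion, Finset.mem_image] using h
        simp [(hmem a q).1 hq]
      · obtain ⟨v, w⟩ := p
        cases w with
        | nil => simp at h
        | cons hadj w =>
          exact Finset.mem_biUnion.2 ⟨⟨_, (G.mem_neighborFinset u _).2 hadj⟩,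
            Finset.mem_attach _ _,
            Finset.mem_image.2 ⟨⟨v, w⟩, (hmem _ _).2 (by simpa using h), rfl⟩⟩

namespace Walk

/-- The paper's *monotone* walks: the labels strictly decrease along the walk. -/
def IsDecreasing (τ : G.edgeSet → ℝ) {u v : V} (w : G.Walk u v) : Prop :=
  (w.darts.map fun δ => τ ⟨δ.edge, δ.edge_mem⟩).Pairwise (· > ·)

variable {τ : G.edgeSet → ℝ} {u v : V}

theorem IsDecreasing.take {w : G.Walk u v} (h : w.IsDecreasing τ) (n : ℕ) :
    (w.take n).IsDecreasing τ := by
  rw [IsDecreasing, darts_take, List.map_take]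
  exact h.sublist (List.take_sublist _ _)

theorem start_mem_of_head?_edges {w : G.Walk u v} {s : Sym2 V} (h : w.edges.head? = some s) :
    u ∈ s := by
  cases w with
  | nil => simp at h
  | cons =>
    simp only [edges_cons, List.head?_cons, Option.some.injEq] at h
    exact h ▸ Sym2.mem_mk_left _ _

theorem measure_isDecreasing_le {μ : Measure (G.edgeSet → ℝ)} [IsProbabilityMeasure μ]
    (m : Measure ℝ) [IsProbabilityMeasure m] (hindep : iIndepFun (fun ε τ => τ ε) μ)
    (hlaw : ∀ ε, μ.map (fun τ => τ ε) = m) (w : G.Walk u v) :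
    μ {τ | w.IsDecreasing τ} ≤ (w.length ! : ℝ≥0∞)⁻¹ := by
  simpa [IsDecreasing, List.map_map, Function.comp_def] using
    measure_pairwise_gt_le m hindep hlaw (w.darts.map fun δ => ⟨δ.edge, δ.edge_mem⟩)

end Walk

theorem measure_exists_isDecreasing_walk_le [G.LocallyFinite] {d : ℕ}
    (hdeg : ∀ v, G.degree v ≤ d) {μ : Measure (G.edgeSet → ℝ)} [IsProbabilityMeasure μ]
    (m : Measure ℝ) [IsProbabilityMeasure m] (hindep : iIndepFun (fun ε τ => τ ε) μ)
    (hlaw : ∀ ε, μ.map (fun τ => τ ε) = m) (u : V) (n : ℕ) :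
    μ {τ | ∃ (v : V) (w : G.Walk u v), w.length = n ∧ w.IsDecreasing τ}
      ≤ d ^ n * (n ! : ℝ≥0∞)⁻¹ := by
  obtain ⟨s, hcard, hmem⟩ := exists_finset_walks_length_eq hdeg n u
  calc _ ≤ μ (⋃ p ∈ s, {τ | p.2.IsDecreasing τ}) :=
        measure_mono <| by
          rintro τ ⟨v, w, hw, hdec⟩
          exact Set.mem_biUnion ((hmem ⟨v, w⟩).2 hw) hdec
    _ ≤ ∑ p ∈ s, μ {τ | p.2.IsDecreasing τ} := measure_biUnion_finset_le _ _
    _ ≤ ∑ _p ∈ s, (n ! : ℝ≥0∞)⁻¹ := Finset.sum_le_sum fun p hp =>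
        (hmem p).1 hp ▸ p.2.measure_isDecreasing_le m hindep hlaw
    _ ≤ d ^ n * (n ! : ℝ≥0∞)⁻¹ := by
        rw [Finset.sum_const, nsmul_eq_mul]
        gcongr
        exact_mod_cast hcard

end SimpleGraph

theorem stmt_9 {V : Type*} (G : SimpleGraph V) [G.LocallyFinite] (d : ℕ)
    (hdeg : ∀ v : V, G.degree v ≤ d)
    (μ : Measure (G.edgeSet → ℝ)) [IsProbabilityMeasure μ]
    (hindep : iIndepFun
      (fun (ε : G.edgeSet) (τ : G.edgeSet → ℝ) => τ ε) μ)
    (hunif : ∀ ε : G.edgeSet,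
      μ.map (fun τ => τ ε) = volume.restrict (Set.Icc (0 : ℝ) 1))
    (e : G.edgeSet) :
    μ {τ : G.edgeSet → ℝ | ∃ r : ℕ, ∀ (u v : V) (w : G.Walk u v),
        w.edges.head? = some (e : Sym2 V) →
        List.Pairwise (fun a b => b < a)
          (w.darts.map (fun δ => τ ⟨δ.edge, δ.edge_mem⟩)) →
        w.length ≤ r} = 1 := by
  have : IsProbabilityMeasure (volume.restrict (Set.Icc (0 : ℝ) 1)) := ⟨by simp⟩
  obtain ⟨⟨x, y⟩, hxy⟩ := Quot.exists_rep (e : Sym2 V)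
  let A : V → ℕ → Set (G.edgeSet → ℝ) := fun u n =>
    {τ | ∃ (v : V) (w : G.Walk u v), w.length = n ∧ w.IsDecreasing τ}
  let T := {τ : G.edgeSet → ℝ | ∃ r : ℕ, ∀ (u v : V) (w : G.Walk u v),
    w.edges.head? = some (e : Sym2 V) → w.IsDecreasing τ → w.length ≤ r}
  change μ T = 1
  have hcover : ∀ n, Tᶜ ⊆ A x (n + 1) ∪ A y (n + 1) := by
    intro n τ hτ
    simp only [T, Set.mem_compl_iff, Set.mem_ofPred_eq, not_exists, not_forall, not_le] at hτ
    obtain ⟨u, v, w, hhead, hdec, hlen⟩ := hτ n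
    have hw : (w.take (n + 1)).length = n + 1 := by rw [SimpleGraph.Walk.take_length]; omega
    have hu := SimpleGraph.Walk.start_mem_of_head?_edges hhead
    rw [← hxy, Sym2.mem_iff] at hu
    rcases hu with rfl | rfl
    exacts [.inl ⟨_, _, hw, hdec.take _⟩, .inr ⟨_, _, hw, hdec.take _⟩]
  have hbound := fun u => SimpleGraph.measure_exists_isDecreasing_walk_le hdeg _ hindep hunif u
  have hlim := (ENNReal.tendsto_pow_mul_inv_factorial_atTop (ENNReal.natCast_ne_top d)).comp
    (tendsto_add_atTop_nat 1)
  have hnull : μ Tᶜ = 0 := le_antisymm (ge_of_tendsto' (by simpa using hlim.add hlim) fun n =>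
    (measure_mono (hcover n)).trans <| (measure_union_le _ _).trans <|
      add_le_add (hbound x (n + 1)) (hbound y (n + 1))) bot_le
  exact (measure_congr (ae_eq_univ.2 hnull)).trans measure_univ
end
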